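/- arXiv:cs/0402039 — 2 statements merged into one kernel-verified Lean document; each statement's English description precedes it below -/
import Mathlib

section
/- Let 0 ≤ m_r ≤ d_r, 0 ≤ m_f ≤ d_f and 0 ≤ m_r′ ≤ d_r′, 0 ≤ m_f′ ≤ d_f′ be reals such that d_r ≥ d_f − m_f, d_f ≥ d_r − m_r, d_r′ ≥ d_f′ − m_f′ and d_f′ ≥ d_r′ − m_r′. Then Sol_BDC^{m_r,d_r,m_f,d_f}(u) ⊆ Sol_BDC^{m_r′,d_r′,m_f′,d_f′}(u) holds for every signal u if and only if d_r′ − m_r′ ≤ d_r − m_r ≤ d_f ≤ d_f′ and d_f′ − m_f′ ≤ d_f − m_f ≤ d_r ≤ d_r′. -/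
open Set

/-- A signal: a `Bool`-valued function of real time which is constant before
some `t 0` and constant on each interval `[t k, t (k+1))`, where `t` is a
strictly increasing sequence tending to `+∞`. -/
def IsSignal (x : ℝ → Bool) : Prop :=
  ∃ t : ℕ → ℝ, StrictMono t ∧ Filter.Tendsto t Filter.atTop Filter.atTop ∧
    (∀ a ∈ Set.Iio (t 0), ∀ b ∈ Set.Iio (t 0), x a = x b) ∧
    (∀ k : ℕ, ∀ s ∈ Set.Ico (t k) (t (k + 1)), x s = x (t k))

-- The infimum (logical AND) of `u` over a set `A` (true on the empty set).
open Classical in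
noncomputable def infOn (u : ℝ → Bool) (A : Set ℝ) : Bool :=
  decide (∀ ξ ∈ A, u ξ = true)

-- The supremum (logical OR) of `u` over a set `A` (false on the empty set).
open Classical in
noncomputable def supOn (u : ℝ → Bool) (A : Set ℝ) : Bool :=
  decide (∃ ξ ∈ A, u ξ = true)

-- The left limit `x(t-0)`: the constant value of `x` on `(t-ε, t)` for small `ε > 0`.
open Classical in
noncomputable def leftVal (x : ℝ → Bool) (t : ℝ) : Bool :=
  decide (∃ ε > 0, ∀ s ∈ Set.Ioo (t - ε) t, x s = true)

/-- The bounded delay condition. -/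
noncomputable def SolBDC (mr dr mf df : ℝ) (u : ℝ → Bool) : Set (ℝ → Bool) :=
  {x | IsSignal x ∧ ∀ t : ℝ,
    infOn u (Set.Icc (t - dr) (t - dr + mr)) ≤ x t ∧
    x t ≤ supOn u (Set.Icc (t - df) (t - df + mf))}

/-- The absolute inertial condition. -/
noncomputable def SolAIC (δr δf : ℝ) : Set (ℝ → Bool) :=
  {x | IsSignal x ∧ ∀ t : ℝ,
    (!leftVal x t && x t) ≤ infOn x (Set.Icc t (t + δr)) ∧
    (leftVal x t && !x t) ≤ infOn (fun ξ => !x ξ) (Set.Icc t (t + δf))}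

/-- The relative inertial condition. -/
noncomputable def SolRIC (μr δr μf δf : ℝ) (u : ℝ → Bool) : Set (ℝ → Bool) :=
  {x | IsSignal x ∧ ∀ t : ℝ,
    (!leftVal x t && x t) ≤ infOn u (Set.Icc (t - δr) (t - δr + μr)) ∧
    (leftVal x t && !x t) ≤ infOn (fun ξ => !u ξ) (Set.Icc (t - δf) (t - δf + μf))}


lemma bool_le_iff {a b : Bool} : a ≤ b ↔ (a = true → b = true) := by
  cases a <;> cases b <;> simp

lemma isSignal_ge (c : ℝ) : IsSignal (fun s => decide (c ≤ s)) := by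
  refine ⟨fun k => c + k, ?_, ?_, ?_, ?_⟩
  · intro a b hab
    simpa using (Nat.cast_lt (α := ℝ)).2 hab
  · exact Filter.tendsto_atTop_add_const_left _ c tendsto_natCast_atTop_atTop
  · intro a ha b hb
    simp only [Nat.cast_zero, add_zero, mem_Iio] at ha hb
    simp [not_le.2 ha, not_le.2 hb]
  · intro k s hs
    have h1 : c ≤ s := le_trans (le_add_of_nonneg_right (Nat.cast_nonneg k)) hs.1
    have h2 : c ≤ c + (k:ℝ) := le_add_of_nonneg_right (Nat.cast_nonneg k)
    simp [h1, h2]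

lemma isSignal_lt (c : ℝ) : IsSignal (fun s => decide (s < c)) := by
  refine ⟨fun k => c + k, ?_, ?_, ?_, ?_⟩
  · intro a b hab
    simpa using (Nat.cast_lt (α := ℝ)).2 hab
  · exact Filter.tendsto_atTop_add_const_left _ c tendsto_natCast_atTop_atTop
  · intro a ha b hb
    simp only [Nat.cast_zero, add_zero, mem_Iio] at ha hb
    simp [ha, hb]
  · intro k s hs
    have h1 : c ≤ s := le_trans (le_add_of_nonneg_right (Nat.cast_nonneg k)) hs.1
    have h2 : c ≤ c + (k:ℝ) := le_add_of_nonneg_right (Nat.cast_nonneg k)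
    simp [not_lt.2 h1, not_lt.2 h2]

lemma infOn_anti (u : ℝ → Bool) {A B : Set ℝ} (h : A ⊆ B) : infOn u B ≤ infOn u A := by
  classical
  rw [bool_le_iff]
  simp only [infOn, decide_eq_true_iff]
  exact fun hB ξ hξ => hB ξ (h hξ)

lemma supOn_mono (u : ℝ → Bool) {A B : Set ℝ} (h : A ⊆ B) : supOn u A ≤ supOn u B := by
  classical
  rw [bool_le_iff]
  simp only [supOn, decide_eq_true_iff]
  rintro ⟨ξ, hξ, hu⟩
  exact ⟨ξ, h hξ, hu⟩

lemma infOn_eq_true (u : ℝ → Bool) (A : Set ℝ) :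
    infOn u A = true ↔ ∀ ξ ∈ A, u ξ = true := by
  classical simp [infOn]

lemma supOn_eq_true (u : ℝ → Bool) (A : Set ℝ) :
    supOn u A = true ↔ ∃ ξ ∈ A, u ξ = true := by
  classical simp [supOn]

lemma key1 (mr dr mf df : ℝ)
    (hmr : 0 ≤ mr) (hmf : 0 ≤ mf)
    (mr' dr' mf' df' : ℝ) (hmr' : 0 ≤ mr') (hmf' : 0 ≤ mf')
    (h : ∀ u : ℝ → Bool, IsSignal u →
        SolBDC mr dr mf df u ⊆ SolBDC mr' dr' mf' df' u)
    (c : ℝ) (h1 : df - mf ≤ c) (h2 : c ≤ dr) :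
    df' - mf' ≤ c ∧ c ≤ dr' := by
  set u : ℝ → Bool := fun s => decide (0 ≤ s) with hu
  set x : ℝ → Bool := fun s => decide (c ≤ s) with hx
  have hmem : x ∈ SolBDC mr dr mf df u := by
    refine ⟨isSignal_ge c, fun t => ⟨?_, ?_⟩⟩
    · rw [bool_le_iff, infOn_eq_true]
      intro hall
      have := hall (t - dr) ⟨le_refl _, by linarith⟩
      simp only [hu, decide_eq_true_iff] at this
      simp only [hx, decide_eq_true_iff]
      linarith
    · rw [bool_le_iff]
      intro hxt
      simp only [hx, decide_eq_true_iff] at hxt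
      rw [supOn_eq_true]
      exact ⟨t - df + mf, ⟨by linarith, le_refl _⟩, by simp [hu]; linarith⟩
  have hmem' := h u (isSignal_ge 0) hmem
  constructor
  · have := (hmem'.2 c).2
    rw [bool_le_iff] at this
    have hxc : x c = true := by simp [hx]
    obtain ⟨ξ, hξ, huξ⟩ := (supOn_eq_true _ _).1 (this hxc)
    simp only [hu, decide_eq_true_iff] at huξ
    have := hξ.2
    linarith
  · have := (hmem'.2 dr').1
    rw [bool_le_iff] at this
    have hinf : infOn u (Icc (dr' - dr') (dr' - dr' + mr')) = true := by
      rw [infOn_eq_true]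
      intro ξ hξ
      simp only [hu, decide_eq_true_iff]
      have := hξ.1
      linarith
    have := this hinf
    simpa [hx] using this

lemma key2 (mr dr mf df : ℝ)
    (hmr : 0 ≤ mr) (hmf : 0 ≤ mf)
    (mr' dr' mf' df' : ℝ) (hmr' : 0 ≤ mr') (hmf' : 0 ≤ mf')
    (h : ∀ u : ℝ → Bool, IsSignal u →
        SolBDC mr dr mf df u ⊆ SolBDC mr' dr' mf' df' u)
    (c : ℝ) (h1 : dr - mr ≤ c) (h2 : c ≤ df) :
    dr' - mr' ≤ c ∧ c ≤ df' := by
  set u : ℝ → Bool := fun s => decide (s < 0) with hu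
  set x : ℝ → Bool := fun s => decide (s < c) with hx
  have hmem : x ∈ SolBDC mr dr mf df u := by
    refine ⟨isSignal_lt c, fun t => ⟨?_, ?_⟩⟩
    · rw [bool_le_iff, infOn_eq_true]
      intro hall
      have := hall (t - dr + mr) ⟨by linarith, le_refl _⟩
      simp only [hu, decide_eq_true_iff] at this
      simp only [hx, decide_eq_true_iff]
      linarith
    · rw [bool_le_iff]
      intro hxt
      simp only [hx, decide_eq_true_iff] at hxt
      rw [supOn_eq_true]
      exact ⟨t - df, ⟨le_refl _, by linarith⟩, by simp [hu]; linarith⟩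
  have hmem' := h u (isSignal_lt 0) hmem
  constructor
  · by_contra hcon
    push_neg at hcon
    have := (hmem'.2 c).1
    rw [bool_le_iff] at this
    have hinf : infOn u (Icc (c - dr') (c - dr' + mr')) = true := by
      rw [infOn_eq_true]
      intro ξ hξ
      simp only [hu, decide_eq_true_iff]
      have := hξ.2
      linarith
    have := this hinf
    simp [hx] at this
  · by_contra hcon
    push_neg at hcon
    have := (hmem'.2 df').2
    rw [bool_le_iff] at this
    have hxc : x df' = true := by simp [hx]; linarith
    obtain ⟨ξ, hξ, huξ⟩ := (supOn_eq_true _ _).1 (this hxc)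
    simp only [hu, decide_eq_true_iff] at huξ
    have := hξ.1
    linarith

theorem bdc_subset_iff (mr dr mf df : ℝ)
    (hmr : 0 ≤ mr) (hmrdr : mr ≤ dr) (hmf : 0 ≤ mf) (hmfdf : mf ≤ df) (hcc1 : dr ≥ df - mf) (hcc2 : df ≥ dr - mr)
    (mr' dr' mf' df' : ℝ)
    (hmr' : 0 ≤ mr') (hmrdr' : mr' ≤ dr') (hmf' : 0 ≤ mf') (hmfdf' : mf' ≤ df')
    (hcc1' : dr' ≥ df' - mf') (hcc2' : df' ≥ dr' - mr') :
    (∀ u : ℝ → Bool, IsSignal u →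
        SolBDC mr dr mf df u ⊆ SolBDC mr' dr' mf' df' u) ↔
      ((dr' - mr' ≤ dr - mr ∧ dr - mr ≤ df ∧ df ≤ df') ∧
       (df' - mf' ≤ df - mf ∧ df - mf ≤ dr ∧ dr ≤ dr')) := by
  constructor
  · intro h
    have k1 := key1 mr dr mf df hmr hmf mr' dr' mf' df' hmr' hmf' h dr (by linarith) le_rfl
    have k1' := key1 mr dr mf df hmr hmf mr' dr' mf' df' hmr' hmf' h (df - mf) le_rfl (by linarith)
    have k2 := key2 mr dr mf df hmr hmf mr' dr' mf' df' hmr' hmf' h (dr - mr) le_rfl (by linarith)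
    have k2' := key2 mr dr mf df hmr hmf mr' dr' mf' df' hmr' hmf' h df (by linarith) le_rfl
    exact ⟨⟨k2.1, by linarith, k2'.2⟩, ⟨k1'.1, by linarith, k1.2⟩⟩
  · rintro ⟨⟨h1, h2, h3⟩, ⟨h4, h5, h6⟩⟩ u hu x ⟨hsig, hx⟩
    refine ⟨hsig, fun t => ⟨?_, ?_⟩⟩
    · exact le_trans (infOn_anti u (Icc_subset_Icc (by linarith) (by linarith))) (hx t).1
    · exact le_trans (hx t).2 (supOn_mono u (Icc_subset_Icc (by linarith) (by linarith)))
end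

section
/- Let 0 ≤ m_r ≤ d_r, 0 ≤ m_f ≤ d_f be reals with d_r ≥ d_f − m_f and d_f ≥ d_r − m_r. Then for every signal u there exists exactly one signal x satisfying: for all t ∈ ℝ, (¬x(t−0)) ∧ x(t) = (¬x(t−0)) ∧ ⋀_{ξ∈[t−d_r, t−d_r+m_r]} u(ξ) and x(t−0) ∧ (¬x(t)) = x(t−0) ∧ ⋀_{ξ∈[t−d_f, t−d_f+m_f]} ¬u(ξ); i.e., the bounded relative inertial delay condition Sol_BDC^{m_r,d_r,m_f,d_f} ∩ Sol_RIC^{m_r,d_r,m_f,d_f} is deterministic. -/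
open Set

open Classical in
lemma infOn_eq_true_iff {u : ℝ → Bool} {A : Set ℝ} :
    infOn u A = true ↔ ∀ ξ ∈ A, u ξ = true := by
  simp [infOn]

-- largest index with t k ≤ M, when t 0 ≤ M
lemma exists_max_index {t : ℕ → ℝ} (hm : StrictMono t)
    (ht : Filter.Tendsto t Filter.atTop Filter.atTop) {M : ℝ} (h0 : t 0 ≤ M) :
    ∃ k, t k ≤ M ∧ M < t (k + 1) := by
  by_contra h
  push_neg at h
  have key : ∀ k, t k ≤ M := by
    intro k
    induction k with
    | zero => exact h0
    | succ n ih => exact h n ih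
  obtain ⟨N, hN⟩ := (Filter.tendsto_atTop.mp ht (M + 1)).exists
  linarith [key N]

lemma signal_right {x : ℝ → Bool} (hx : IsSignal x) (t : ℝ) :
    ∃ ε > 0, ∀ s ∈ Ico t (t + ε), x s = x t := by
  obtain ⟨g, hm, htop, hinit, hcell⟩ := hx
  rcases lt_or_ge t (g 0) with h | h
  · exact ⟨g 0 - t, by linarith, fun s hs => hinit s (by simp only [mem_Iio]; linarith [hs.2]) t h⟩
  · obtain ⟨k, hk1, hk2⟩ := exists_max_index hm htop h
    refine ⟨g (k+1) - t, by linarith, fun s hs => ?_⟩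
    rw [hcell k s ⟨le_trans hk1 hs.1, by linarith [hs.2]⟩, hcell k t ⟨hk1, hk2⟩]

lemma signal_left {x : ℝ → Bool} (hx : IsSignal x) (t : ℝ) :
    ∃ ε > 0, ∀ s ∈ Ioo (t - ε) t, ∀ s' ∈ Ioo (t - ε) t, x s = x s' := by
  obtain ⟨g, hm, htop, hinit, hcell⟩ := hx
  rcases le_or_gt t (g 0) with h | h
  · refine ⟨1, one_pos, fun s hs s' hs' => hinit s (by simp only [mem_Iio]; linarith [hs.2]) s'
      (by simp only [mem_Iio]; linarith [hs'.2])⟩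
  · obtain ⟨k, hk1, hk2⟩ := exists_max_index hm htop h.le
    rcases lt_or_ge (g k) t with hlt | hle
    · -- g k < t ≤ ? ; t ≤ g (k+1) or t < g (k+1); either way (g k, t) ⊆ [g k, g (k+1))
      refine ⟨t - g k, by linarith, fun s hs s' hs' => ?_⟩
      rw [hcell k s ⟨by linarith [hs.1], by linarith [hs.2, hk2]⟩,
        hcell k s' ⟨by linarith [hs'.1], by linarith [hs'.2, hk2]⟩]
    · -- t ≤ g k but also g k ≤ t from hk1, so t = g k
      have : t = g k := le_antisymm hle hk1
      subst this
      rcases Nat.eq_zero_or_pos k with rfl | hkpos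
      · exact absurd h (lt_irrefl _)
      · obtain ⟨j, rfl⟩ : ∃ j, k = j + 1 := ⟨k - 1, (Nat.succ_pred_eq_of_pos hkpos).symm⟩
        refine ⟨g (j+1) - g j, by linarith [hm (Nat.lt_succ_self j)], fun s hs s' hs' => ?_⟩
        rw [hcell j s ⟨by linarith [hs.1], hs.2⟩, hcell j s' ⟨by linarith [hs'.1], hs'.2⟩]

lemma signal_init {x : ℝ → Bool} (hx : IsSignal x) :
    ∃ B : ℝ, ∀ a ∈ Iio B, ∀ b ∈ Iio B, x a = x b := by
  obtain ⟨g, _, _, hinit, _⟩ := hx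
  exact ⟨g 0, hinit⟩

open Classical in
lemma leftVal_eq {x : ℝ → Bool} {t ε : ℝ} {v : Bool} (hε : 0 < ε)
    (h : ∀ s ∈ Ioo (t - ε) t, x s = v) : leftVal x t = v := by
  cases v with
  | true =>
    simp only [leftVal, decide_eq_true_eq]
    exact ⟨ε, hε, h⟩
  | false =>
    simp only [leftVal]
    apply decide_eq_false
    rintro ⟨ε', hε', hall⟩
    have hmin : 0 < min ε ε' := lt_min hε hε'
    have hmem : t - min ε ε' / 2 ∈ Ioo (t - ε) t := by
      constructor <;> nlinarith [min_le_left ε ε', min_le_right ε ε']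
    have h1 := h _ hmem
    have h2 := hall (t - min ε ε' / 2) ⟨by nlinarith [min_le_right ε ε'], by nlinarith⟩
    rw [h1] at h2; exact Bool.false_ne_true h2

lemma isSignal_of {x : ℝ → Bool}
    (hB : ∃ B : ℝ, ∀ a ∈ Iio B, ∀ b ∈ Iio B, x a = x b)
    (hr : ∀ t, ∃ ε > 0, ∀ s ∈ Ico t (t + ε), x s = x t)
    (hl : ∀ t, ∃ ε > 0, ∀ s ∈ Ioo (t - ε) t, ∀ s' ∈ Ioo (t - ε) t, x s = x s') :
    IsSignal x := by
  classical
  obtain ⟨B, hB⟩ := hB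
  set G : ℝ → Set ℝ := fun a => {c | c ≤ a + 1 ∧ a < c ∧ ∀ s ∈ Ico a c, x s = x a} with hG
  have hne : ∀ a, (G a).Nonempty := by
    intro a
    obtain ⟨ε, hε, hconst⟩ := hr a
    refine ⟨min (a + ε) (a + 1), min_le_right _ _, lt_min (by linarith) (by linarith), ?_⟩
    intro s hs
    exact hconst s ⟨hs.1, lt_of_lt_of_le hs.2 (min_le_left _ _)⟩
  have hbdd : ∀ a, BddAbove (G a) := fun a => ⟨a + 1, fun c hc => hc.1⟩
  set step : ℝ → ℝ := fun a => sSup (G a) with hstepdef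
  have hstep_gt : ∀ a, a < step a := by
    intro a
    obtain ⟨c, hc⟩ := hne a
    exact lt_of_lt_of_le hc.2.1 (le_csSup (hbdd a) hc)
  have hstep_const : ∀ a, ∀ s ∈ Ico a (step a), x s = x a := by
    intro a s hs
    obtain ⟨c, hc, hsc⟩ := exists_lt_of_lt_csSup (hne a) hs.2
    exact hc.2.2 s ⟨hs.1, hsc⟩
  have hstep_ge : ∀ a c, c ∈ G a → c ≤ step a := fun a c hc => le_csSup (hbdd a) hc
  set t : ℕ → ℝ := fun n => n.rec B (fun _ ih => step ih) with ht
  have htsucc : ∀ n, t (n + 1) = step (t n) := fun n => rfl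
  have hmono : StrictMono t := strictMono_nat_of_lt_succ (fun n => hstep_gt (t n))
  have htop : Filter.Tendsto t Filter.atTop Filter.atTop := by
    by_contra hcon
    rcases tendsto_of_monotone hmono.monotone with h | ⟨L, hL⟩
    · exact hcon h
    have hle : ∀ n, t n ≤ L := fun n => Monotone.ge_of_tendsto hmono.monotone hL n
    have hltL : ∀ n, t n < L := fun n => lt_of_lt_of_le (hmono (Nat.lt_succ_self n)) (hle (n + 1))
    obtain ⟨δ, hδ, hconst⟩ := hl L
    have hmin : (0:ℝ) < min δ 1 := lt_min hδ one_pos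
    obtain ⟨k, hk⟩ := (hL.eventually (eventually_gt_nhds (show L - min δ 1 < L by linarith))).exists
    -- show L ∈ G (t k)
    have hs0 : (t k + t (k + 1)) / 2 ∈ Ico (t k) (t (k + 1)) := by
      constructor <;> nlinarith [hmono (Nat.lt_succ_self k)]
    have hs0' : (t k + t (k + 1)) / 2 ∈ Ioo (L - δ) L := by
      have h1 : min δ 1 ≤ δ := min_le_left _ _
      constructor
      · nlinarith [hmono (Nat.lt_succ_self k), hk]
      · nlinarith [hltL (k + 1), hmono (Nat.lt_succ_self k)]
    have hLG : L ∈ G (t k) := by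
      refine ⟨?_, hltL k, ?_⟩
      · have : min δ 1 ≤ 1 := min_le_right _ _
        linarith [hk]
      · intro s hs
        rcases eq_or_lt_of_le hs.1 with rfl | hlt
        · rfl
        · have hsmem : s ∈ Ioo (L - δ) L := by
            constructor
            · have h1 : min δ 1 ≤ δ := min_le_left _ _
              linarith [hk]
            · exact hs.2
          calc x s = x ((t k + t (k + 1)) / 2) := hconst s hsmem _ hs0'
            _ = x (t k) := by
                rw [htsucc k] at hs0
                exact hstep_const (t k) _ hs0
    have : L ≤ t (k + 1) := by rw [htsucc]; exact hstep_ge (t k) L hLG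
    exact absurd (hltL (k + 1)) (not_lt.mpr this)
  refine ⟨t, hmono, htop, ?_, ?_⟩
  · exact hB
  · intro k s hs
    rw [htsucc] at hs
    exact hstep_const (t k) s hs

noncomputable def win (u : ℝ → Bool) (c m t : ℝ) : Bool := infOn u (Icc (t - c) (t - c + m))

lemma win_eq_true_iff {u : ℝ → Bool} {c m t : ℝ} :
    win u c m t = true ↔ ∀ ξ ∈ Icc (t - c) (t - c + m), u ξ = true := by
  rw [win, infOn_eq_true_iff]

lemma win_right {u : ℝ → Bool} {c m : ℝ} (hm : 0 ≤ m)
    (hr : ∀ t, ∃ ε > 0, ∀ s ∈ Ico t (t + ε), u s = u t) (t : ℝ) :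
    ∃ ε > 0, ∀ s ∈ Ico t (t + ε), win u c m s = win u c m t := by
  obtain ⟨εa, hεa, hca⟩ := hr (t - c)
  obtain ⟨εb, hεb, hcb⟩ := hr (t - c + m)
  refine ⟨min εa εb, lt_min hεa hεb, fun s hs => ?_⟩
  have hst : t ≤ s := hs.1
  have hsa : s < t + εa := lt_of_lt_of_le hs.2 (by simp [min_le_left])
  have hsb : s < t + εb := lt_of_lt_of_le hs.2 (by simp [min_le_right])
  have fwd : win u c m t = true → win u c m s = true := by
    intro h
    rw [win_eq_true_iff] at h ⊢
    intro ξ hξ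
    rcases le_or_gt ξ (t - c + m) with h1 | h1
    · exact h ξ ⟨by linarith [hξ.1], h1⟩
    · have : u ξ = u (t - c + m) := hcb ξ ⟨h1.le, by linarith [hξ.2]⟩
      rw [this]
      exact h _ ⟨by linarith, le_refl _⟩
  have bwd : win u c m s = true → win u c m t = true := by
    intro h
    rw [win_eq_true_iff] at h ⊢
    intro ξ hξ
    rcases le_or_gt (s - c) ξ with h1 | h1
    · exact h ξ ⟨h1, by linarith [hξ.2]⟩
    · have h2 : u ξ = u (t - c) := hca ξ ⟨hξ.1, by linarith⟩
      have h3 : u (s - c) = u (t - c) := hca (s - c) ⟨by linarith, by linarith⟩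
      rw [h2, ← h3]
      exact h (s - c) ⟨le_refl _, by linarith⟩
  by_cases h : win u c m t = true
  · rw [h, fwd h]
  · have h' : ¬ win u c m s = true := fun hx => h (bwd hx)
    rw [Bool.not_eq_true] at h h'
    rw [h, h']

lemma win_left {u : ℝ → Bool} {c m : ℝ} (hm : 0 ≤ m)
    (hl : ∀ t, ∃ ε > 0, ∀ s ∈ Ioo (t - ε) t, ∀ s' ∈ Ioo (t - ε) t, u s = u s') (t : ℝ) :
    ∃ ε > 0, ∀ s ∈ Ioo (t - ε) t, ∀ s' ∈ Ioo (t - ε) t, win u c m s = win u c m s' := by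
  obtain ⟨εa, hεa, hca⟩ := hl (t - c)
  obtain ⟨εb, hεb, hcb⟩ := hl (t - c + m)
  have hmina : min εa εb ≤ εa := min_le_left _ _
  have hminb : min εa εb ≤ εb := min_le_right _ _
  have key : ∀ s s', s ∈ Ioo (t - min εa εb) t → s' ∈ Ioo (t - min εa εb) t → s ≤ s' →
      win u c m s' = true → win u c m s = true := by
    intro s s' hs hs' hss hw
    rw [win_eq_true_iff] at hw ⊢
    intro ξ hξ
    rcases le_or_gt (s' - c) ξ with h1 | h1
    · exact hw ξ ⟨h1, by linarith [hξ.2]⟩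
    · have hx1 : ξ ∈ Ioo (t - c - εa) (t - c) :=
        ⟨by linarith [hξ.1, hs.1], by linarith [hs'.2]⟩
      have hx2 : s' - c ∈ Ioo (t - c - εa) (t - c) :=
        ⟨by linarith [hs'.1], by linarith [hs'.2]⟩
      have : u ξ = u (s' - c) := by
        have := hca ξ (by simpa [sub_sub] using hx1) (s' - c) (by simpa [sub_sub] using hx2)
        exact this
      rw [this]
      exact hw _ ⟨le_refl _, by linarith⟩
  have key2 : ∀ s s', s ∈ Ioo (t - min εa εb) t → s' ∈ Ioo (t - min εa εb) t → s ≤ s' →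
      win u c m s = true → win u c m s' = true := by
    intro s s' hs hs' hss hw
    rw [win_eq_true_iff] at hw ⊢
    intro ξ hξ
    rcases le_or_gt ξ (s - c + m) with h1 | h1
    · exact hw ξ ⟨by linarith [hξ.1], h1⟩
    · have hx1 : ξ ∈ Ioo (t - c + m - εb) (t - c + m) :=
        ⟨by linarith [hs.1], by linarith [hξ.2, hs'.2]⟩
      have hx2 : s - c + m ∈ Ioo (t - c + m - εb) (t - c + m) :=
        ⟨by linarith [hs.1], by linarith [hs.2]⟩
      have : u ξ = u (s - c + m) := hcb ξ hx1 (s - c + m) hx2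
      rw [this]
      exact hw _ ⟨by linarith, le_refl _⟩
  refine ⟨min εa εb, lt_min hεa hεb, fun s hs s' hs' => ?_⟩
  have main : ∀ s s', s ∈ Ioo (t - min εa εb) t → s' ∈ Ioo (t - min εa εb) t → s ≤ s' →
      win u c m s = win u c m s' := by
    intro s s' hs hs' hss
    by_cases hy : win u c m s' = true
    · rw [hy]; exact key s s' hs hs' hss hy
    · have hx : ¬ win u c m s = true := fun hx => hy (key2 s s' hs hs' hss hx)
      rw [Bool.not_eq_true] at hx hy
      rw [hx, hy]
  rcases le_total s s' with hss | hss
  · exact main s s' hs hs' hss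
  · exact (main s' s hs' hs hss).symm

open Classical in
noncomputable def sol (R F : ℝ → Bool) (t : ℝ) : Bool :=
  decide (∃ s, s ≤ t ∧ R s = true ∧ ∀ r, s < r → r ≤ t → F r = false)

lemma sol_eq_true_iff {R F : ℝ → Bool} {t : ℝ} :
    sol R F t = true ↔ ∃ s, s ≤ t ∧ R s = true ∧ ∀ r, s < r → r ≤ t → F r = false := by
  simp [sol]

section solprops

variable {R F : ℝ → Bool}

lemma sol_right (hRF : ∀ t, ¬(R t = true ∧ F t = true))
    (hRr : ∀ t, ∃ ε > 0, ∀ s ∈ Ico t (t + ε), R s = R t)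
    (hFr : ∀ t, ∃ ε > 0, ∀ s ∈ Ico t (t + ε), F s = F t) (t : ℝ) :
    ∃ ε > 0, ∀ s ∈ Ico t (t + ε), sol R F s = sol R F t := by
  obtain ⟨εR, hεR, hR⟩ := hRr t
  obtain ⟨εF, hεF, hF⟩ := hFr t
  have hminR : min εR εF ≤ εR := min_le_left _ _
  have hminF : min εR εF ≤ εF := min_le_right _ _
  refine ⟨min εR εF, lt_min hεR hεF, fun t' ht' => ?_⟩
  have htt' : t ≤ t' := ht'.1
  have hmem : ∀ p, t ≤ p → p ≤ t' → p ∈ Ico t (t + min εR εF) :=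
    fun p h1 h2 => ⟨h1, lt_of_le_of_lt h2 ht'.2⟩
  by_cases hFt : F t = true
  · -- sol ≡ false on the interval
    have hfalse : ∀ p, p ∈ Ico t (t + min εR εF) → sol R F p = false := by
      intro p hp
      rw [Bool.eq_false_iff]
      intro hsol
      obtain ⟨s, hst, hRs, hnoF⟩ := sol_eq_true_iff.mp hsol
      rcases lt_or_ge s t with hlt | hle
      · have := hnoF t hlt hp.1
        rw [hFt] at this; exact Bool.noConfusion this
      · have hFs : F s = true := by
          rw [hF s ⟨hle, by linarith [hp.2, hminF, hst]⟩, hFt]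
        exact hRF s ⟨hRs, hFs⟩
    rw [hfalse t' ht', hfalse t ⟨le_refl t, by linarith [lt_min hεR hεF]⟩]
  · rw [Bool.not_eq_true] at hFt
    have hFall : ∀ p, p ∈ Ico t (t + min εR εF) → F p = false := by
      intro p hp
      rw [hF p ⟨hp.1, lt_of_lt_of_le hp.2 (by linarith)⟩, hFt]
    by_cases hRt : R t = true
    · have htrue : ∀ p, p ∈ Ico t (t + min εR εF) → sol R F p = true := by
        intro p hp
        rw [sol_eq_true_iff]
        refine ⟨p, le_refl p, ?_, fun r h1 h2 => absurd (lt_of_lt_of_le h1 h2) (lt_irrefl p)⟩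
        rw [hR p ⟨hp.1, lt_of_lt_of_le hp.2 (by linarith)⟩, hRt]
      rw [htrue t' ht', htrue t ⟨le_refl t, by linarith [lt_min hεR hεF]⟩]
    · rw [Bool.not_eq_true] at hRt
      have hfwd : sol R F t = true → sol R F t' = true := by
        intro h
        obtain ⟨s, hst, hRs, hnoF⟩ := sol_eq_true_iff.mp h
        rw [sol_eq_true_iff]
        refine ⟨s, le_trans hst htt', hRs, fun r h1 h2 => ?_⟩
        rcases le_or_gt r t with h3 | h3
        · exact hnoF r h1 h3
        · exact hFall r (hmem r h3.le h2)
      have hbwd : sol R F t' = true → sol R F t = true := by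
        intro h
        obtain ⟨s, hst, hRs, hnoF⟩ := sol_eq_true_iff.mp h
        have hslt : s < t := by
          rcases lt_or_ge s t with h' | h'
          · exact h'
          · exfalso
            have : R s = false := by
              rw [hR s ⟨h', by linarith [ht'.2, hminR, hst]⟩]; exact hRt
            rw [hRs] at this; exact Bool.noConfusion this
        exact sol_eq_true_iff.mpr ⟨s, hslt.le, hRs, fun r h1 h2 => hnoF r h1 (le_trans h2 htt')⟩
      by_cases h : sol R F t = true
      · rw [h, hfwd h]
      · have h' : ¬ sol R F t' = true := fun hx => h (hbwd hx)
        rw [Bool.not_eq_true] at h h'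
        rw [h, h']

lemma sol_left (hRF : ∀ t, ¬(R t = true ∧ F t = true))
    (hRl : ∀ t, ∃ ε > 0, ∀ s ∈ Ioo (t - ε) t, ∀ s' ∈ Ioo (t - ε) t, R s = R s')
    (hFl : ∀ t, ∃ ε > 0, ∀ s ∈ Ioo (t - ε) t, ∀ s' ∈ Ioo (t - ε) t, F s = F s') (t : ℝ) :
    ∃ ε > 0, ∀ s ∈ Ioo (t - ε) t, ∀ s' ∈ Ioo (t - ε) t, sol R F s = sol R F s' := by
  obtain ⟨εR, hεR, hR⟩ := hRl t
  obtain ⟨εF, hεF, hF⟩ := hFl t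
  have hminR : min εR εF ≤ εR := min_le_left _ _
  have hminF : min εR εF ≤ εF := min_le_right _ _
  have hε0 : (0:ℝ) < min εR εF := lt_min hεR hεF
  have hsubR : Ioo (t - min εR εF) t ⊆ Ioo (t - εR) t :=
    fun p hp => ⟨by linarith [hp.1], hp.2⟩
  have hsubF : Ioo (t - min εR εF) t ⊆ Ioo (t - εF) t :=
    fun p hp => ⟨by linarith [hp.1], hp.2⟩
  refine ⟨min εR εF, hε0, ?_⟩
  set I := Ioo (t - min εR εF) t with hI
  have hw : t - min εR εF / 2 ∈ I := by
    constructor <;> nlinarith [hminR, hminF, hεR, hεF]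
  set w := t - min εR εF / 2 with hwdef
  by_cases hFw : F w = true
  · -- F ≡ true on I, sol ≡ false on I
    have hfalse : ∀ p ∈ I, sol R F p = false := by
      intro p hp
      rw [Bool.eq_false_iff]
      intro hsol
      obtain ⟨s, hst, hRs, hnoF⟩ := sol_eq_true_iff.mp hsol
      have hFp : F p = true := by rw [hF p (hsubF hp) w (hsubF hw)]; exact hFw
      rcases lt_or_eq_of_le hst with hlt | rfl
      · have := hnoF p hlt (le_refl p)
        rw [hFp] at this; exact Bool.noConfusion this
      · exact hRF s ⟨hRs, hFp⟩
    intro s hs s' hs'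
    rw [hfalse s hs, hfalse s' hs']
  · rw [Bool.not_eq_true] at hFw
    have hFall : ∀ p ∈ I, F p = false := by
      intro p hp
      rw [hF p (hsubF hp) w (hsubF hw)]; exact hFw
    by_cases hRw : R w = true
    · have htrue : ∀ p ∈ I, sol R F p = true := by
        intro p hp
        rw [sol_eq_true_iff]
        refine ⟨p, le_refl p, ?_, fun r h1 h2 => absurd (lt_of_lt_of_le h1 h2) (lt_irrefl p)⟩
        rw [hR p (hsubR hp) w (hsubR hw)]; exact hRw
      intro s hs s' hs'
      rw [htrue s hs, htrue s' hs']
    · rw [Bool.not_eq_true] at hRw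
      have hRall : ∀ p ∈ I, R p = false := by
        intro p hp
        rw [hR p (hsubR hp) w (hsubR hw)]; exact hRw
      have hchar : ∀ p ∈ I, (sol R F p = true ↔
          ∃ s, s ≤ t - min εR εF ∧ R s = true ∧
            ∀ r, s < r → r ≤ t - min εR εF → F r = false) := by
        intro p hp
        rw [sol_eq_true_iff]
        constructor
        · rintro ⟨s, hst, hRs, hnoF⟩
          have hsle : s ≤ t - min εR εF := by
            by_contra hcon
            push_neg at hcon
            have hsI : s ∈ I := ⟨hcon, lt_of_le_of_lt hst hp.2⟩
            have := hRall s hsI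
            rw [hRs] at this; exact Bool.noConfusion this
          exact ⟨s, hsle, hRs, fun r h1 h2 => hnoF r h1 (by linarith [hp.1])⟩
        · rintro ⟨s, hst, hRs, hnoF⟩
          refine ⟨s, by linarith [hp.1], hRs, fun r h1 h2 => ?_⟩
          rcases le_or_gt r (t - min εR εF) with h3 | h3
          · exact hnoF r h1 h3
          · exact hFall r ⟨h3, lt_of_le_of_lt h2 hp.2⟩
      intro s hs s' hs'
      by_cases h : sol R F s' = true
      · rw [h, (hchar s hs).mpr ((hchar s' hs').mp h)]
      · have h2 : ¬ sol R F s = true := fun hx => h ((hchar s' hs').mpr ((hchar s hs).mp hx))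
        rw [Bool.not_eq_true] at h h2
        rw [h, h2]

end solprops

section solspec

variable {R F : ℝ → Bool}

lemma sol_spec (hRF : ∀ t, ¬(R t = true ∧ F t = true))
    (hRl : ∀ t, ∃ ε > 0, ∀ s ∈ Ioo (t - ε) t, ∀ s' ∈ Ioo (t - ε) t, R s = R s')
    (hFl : ∀ t, ∃ ε > 0, ∀ s ∈ Ioo (t - ε) t, ∀ s' ∈ Ioo (t - ε) t, F s = F s') (t : ℝ) :
    (leftVal (sol R F) t = false → sol R F t = R t) ∧
    (leftVal (sol R F) t = true → sol R F t = !F t) := by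
  obtain ⟨εx, hεx, hx⟩ := sol_left hRF hRl hFl t
  obtain ⟨εF, hεF, hF⟩ := hFl t
  have hminx : min εx εF ≤ εx := min_le_left _ _
  have hminF : min εx εF ≤ εF := min_le_right _ _
  have hε0 : (0:ℝ) < min εx εF := lt_min hεx hεF
  set I := Ioo (t - min εx εF) t with hI
  have hsubx : I ⊆ Ioo (t - εx) t := fun p hp => ⟨by linarith [hp.1], hp.2⟩
  have hsubF : I ⊆ Ioo (t - εF) t := fun p hp => ⟨by linarith [hp.1], hp.2⟩
  have hw : t - min εx εF / 2 ∈ I := by constructor <;> nlinarith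
  set w := t - min εx εF / 2 with hwdef
  set v := sol R F w with hv
  have hlv : leftVal (sol R F) t = v :=
    leftVal_eq hε0 (fun s hs => hx s (hsubx hs) w (hsubx hw))
  cases hvv : v with
  | false =>
    rw [hvv] at hlv
    refine ⟨fun _ => ?_, fun h => absurd (hlv.symm.trans h) Bool.noConfusion⟩
    by_cases hRt : R t = true
    · rw [hRt, sol_eq_true_iff]
      exact ⟨t, le_refl t, hRt, fun r h1 h2 => absurd (lt_of_lt_of_le h1 h2) (lt_irrefl t)⟩
    · rw [Bool.not_eq_true] at hRt
      rw [hRt, Bool.eq_false_iff]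
      intro hsol
      obtain ⟨s, hst, hRs, hnoF⟩ := sol_eq_true_iff.mp hsol
      have hslt : s < t := by
        rcases lt_or_eq_of_le hst with h | rfl
        · exact h
        · rw [hRs] at hRt; exact Bool.noConfusion hRt
      -- find a point p ∈ I with s ≤ p, then sol p = true contradicting v = false
      set p := (max s (t - min εx εF) + t) / 2 with hp
      have hmax : max s (t - min εx εF) < t := max_lt hslt (by linarith)
      have hpI : p ∈ I := by
        constructor
        · have := le_max_right s (t - min εx εF); rw [hp]; linarith
        · rw [hp]; linarith
      have hsp : s ≤ p := by
        have := le_max_left s (t - min εx εF); rw [hp]; linarith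
      have hsolp : sol R F p = true := by
        rw [sol_eq_true_iff]
        exact ⟨s, hsp, hRs, fun r h1 h2 => hnoF r h1 (by linarith [hpI.2])⟩
      have : sol R F p = v := hx p (hsubx hpI) w (hsubx hw)
      rw [hsolp, hvv] at this
      exact Bool.noConfusion this
  | true =>
    rw [hvv] at hlv
    refine ⟨fun h => absurd (hlv.symm.trans h) Bool.noConfusion, fun _ => ?_⟩
    by_cases hFt : F t = true
    · rw [hFt]
      simp only [Bool.not_true]
      rw [Bool.eq_false_iff]
      intro hsol
      obtain ⟨s, hst, hRs, hnoF⟩ := sol_eq_true_iff.mp hsol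
      rcases lt_or_eq_of_le hst with hlt | rfl
      · have := hnoF t hlt (le_refl t)
        rw [hFt] at this; exact Bool.noConfusion this
      · exact hRF s ⟨hRs, hFt⟩
    · rw [Bool.not_eq_true] at hFt
      rw [hFt]
      simp only [Bool.not_false]
      -- F is false on I
      have hFall : ∀ p ∈ I, F p = false := by
        intro p hp
        by_contra hcon
        rw [Bool.not_eq_false] at hcon
        -- then F ≡ true on I, so sol w = false, contradicting v = true
        have hFw : F w = true := by rw [hF w (hsubF hw) p (hsubF hp)]; exact hcon
        have : sol R F w = false := by
          rw [Bool.eq_false_iff]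
          intro hsol
          obtain ⟨s, hst, hRs, hnoF⟩ := sol_eq_true_iff.mp hsol
          rcases lt_or_eq_of_le hst with hlt | heq
          · have := hnoF w hlt (le_refl w)
            rw [hFw] at this; exact Bool.noConfusion this
          · rw [heq] at hRs; exact hRF w ⟨hRs, hFw⟩
        rw [← hv, hvv] at this
        exact Bool.noConfusion this
      have hsolw : sol R F w = true := by rw [← hv, hvv]
      obtain ⟨s, hst, hRs, hnoF⟩ := sol_eq_true_iff.mp hsolw
      rw [sol_eq_true_iff]
      refine ⟨s, le_trans hst (by rw [hwdef]; linarith), hRs, fun r h1 h2 => ?_⟩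
      rcases le_or_gt r w with h3 | h3
      · exact hnoF r h1 h3
      · rcases lt_or_eq_of_le h2 with h4 | rfl
        · exact hFall r ⟨by rw [hwdef] at h3; linarith, h4⟩
        · exact hFt
  
end solspec

lemma bool_cond (l a r f : Bool) :
    ((!l && a) = (!l && r) ∧ (l && !a) = (l && f)) ↔
      ((l = false → a = r) ∧ (l = true → a = !f)) := by
  revert l a r f; decide

lemma uniq_sol {R F x y : ℝ → Bool} {c : Bool} {B : ℝ}
    (hRinit : ∀ t < B, R t = c) (hFinit : ∀ t < B, F t = !c)
    (hx : IsSignal x) (hy : IsSignal y)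
    (hxs : ∀ t, (leftVal x t = false → x t = R t) ∧ (leftVal x t = true → x t = !F t))
    (hys : ∀ t, (leftVal y t = false → y t = R t) ∧ (leftVal y t = true → y t = !F t)) :
    x = y := by
  have init : ∀ z : ℝ → Bool, IsSignal z →
      (∀ t, (leftVal z t = false → z t = R t) ∧ (leftVal z t = true → z t = !F t)) →
      ∃ B', ∀ t, t < B' → z t = c := by
    intro z hz hzs
    obtain ⟨Bz, hBz⟩ := signal_init hz
    refine ⟨min B Bz, fun t ht => ?_⟩
    have htB : t < B := lt_of_lt_of_le ht (min_le_left _ _)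
    have htBz : t < Bz := lt_of_lt_of_le ht (min_le_right _ _)
    have hv : ∀ s ∈ Ioo (t - 1) t, z s = z (Bz - 1) :=
      fun s hs => hBz s (lt_trans hs.2 htBz) _ (by simp only [mem_Iio]; linarith)
    have hlv : leftVal z t = z (Bz - 1) := leftVal_eq one_pos hv
    have hzt : z t = z (Bz - 1) := hBz t htBz _ (by simp only [mem_Iio]; linarith)
    cases hvv : z (Bz - 1) with
    | false =>
      rw [(hzs t).1 (hlv.trans hvv)]
      exact hRinit t htB
    | true =>
      rw [(hzs t).2 (hlv.trans hvv), hFinit t htB, Bool.not_not]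
  obtain ⟨Bx', hBx'⟩ := init x hx hxs
  obtain ⟨By', hBy'⟩ := init y hy hys
  by_contra hne
  have hS : {t | x t ≠ y t}.Nonempty := by
    rcases Function.ne_iff.mp hne with ⟨t, ht⟩; exact ⟨t, ht⟩
  have hbdd : BddBelow {t | x t ≠ y t} := by
    refine ⟨min Bx' By', fun z hz => ?_⟩
    by_contra hcon
    push_neg at hcon
    exact hz (by rw [hBx' z (lt_of_lt_of_le hcon (min_le_left _ _)),
      hBy' z (lt_of_lt_of_le hcon (min_le_right _ _))])
  set T := sInf {t | x t ≠ y t} with hT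
  have hagree : ∀ s, s < T → x s = y s := by
    intro s hs
    by_contra hc
    exact absurd hs (not_lt.mpr (csInf_le hbdd hc))
  obtain ⟨εx, hεx, hlx⟩ := signal_left hx T
  obtain ⟨εy, hεy, hly⟩ := signal_left hy T
  have hε0 : (0:ℝ) < min εx εy := lt_min hεx hεy
  have hwx : ∀ s ∈ Ioo (T - min εx εy) T, s ∈ Ioo (T - εx) T :=
    fun s hs => ⟨by linarith [hs.1, min_le_left εx εy], hs.2⟩
  have hwy : ∀ s ∈ Ioo (T - min εx εy) T, s ∈ Ioo (T - εy) T :=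
    fun s hs => ⟨by linarith [hs.1, min_le_right εx εy], hs.2⟩
  have hwmem : T - min εx εy / 2 ∈ Ioo (T - min εx εy) T := by
    constructor <;> nlinarith
  have hlvx : leftVal x T = x (T - min εx εy / 2) :=
    leftVal_eq hε0 (fun s hs => hlx s (hwx s hs) _ (hwx _ hwmem))
  have hlvy : leftVal y T = x (T - min εx εy / 2) := by
    rw [leftVal_eq hε0 (fun s hs => hly s (hwy s hs) _ (hwy _ hwmem))]
    exact (hagree _ hwmem.2).symm
  have hxyT : x T = y T := by
    cases hww : x (T - min εx εy / 2) with
    | false => rw [(hxs T).1 (hlvx.trans hww), (hys T).1 (hlvy.trans hww)]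
    | true => rw [(hxs T).2 (hlvx.trans hww), (hys T).2 (hlvy.trans hww)]
  obtain ⟨εx', hεx', hrx⟩ := signal_right hx T
  obtain ⟨εy', hεy', hry⟩ := signal_right hy T
  have key : T + min εx' εy' ≤ T := by
    rw [hT]
    apply le_csInf hS
    intro z hz
    by_contra hcon
    push_neg at hcon
    rw [← hT] at hcon
    have hzT : T ≤ z := csInf_le hbdd hz
    apply hz
    rw [hrx z ⟨hzT, by linarith [min_le_left εx' εy']⟩,
      hry z ⟨hzT, by linarith [min_le_right εx' εy']⟩, hxyT]
  linarith [lt_min hεx' hεy']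

theorem bridc_deterministic (mr dr mf df : ℝ)
    (hmr : 0 ≤ mr) (hmrdr : mr ≤ dr) (hmf : 0 ≤ mf) (hmfdf : mf ≤ df) (hcc1 : dr ≥ df - mf) (hcc2 : df ≥ dr - mr) :
    ∀ u : ℝ → Bool, IsSignal u →
      ∃! x : ℝ → Bool, IsSignal x ∧ ∀ t : ℝ,
        (!leftVal x t && x t) =
          (!leftVal x t && infOn u (Set.Icc (t - dr) (t - dr + mr))) ∧
        (leftVal x t && !x t) =
          (leftVal x t && infOn (fun ξ => !u ξ) (Set.Icc (t - df) (t - df + mf))) := by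
  intro u hu
  classical
  obtain ⟨Bu, hBu⟩ := signal_init hu
  have hur := signal_right hu
  have hul := signal_left hu
  have hur2 : ∀ t, ∃ ε > 0, ∀ s ∈ Ico t (t + ε),
      (fun ξ => !u ξ) s = (fun ξ => !u ξ) t := by
    intro t
    obtain ⟨ε, hε, h⟩ := hur t
    exact ⟨ε, hε, fun s hs => by simp only; rw [h s hs]⟩
  have hul2 : ∀ t, ∃ ε > 0, ∀ s ∈ Ioo (t - ε) t, ∀ s' ∈ Ioo (t - ε) t,
      (fun ξ => !u ξ) s = (fun ξ => !u ξ) s' := by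
    intro t
    obtain ⟨ε, hε, h⟩ := hul t
    exact ⟨ε, hε, fun s hs s' hs' => by simp only; rw [h s hs s' hs']⟩
  set R : ℝ → Bool := win u dr mr with hRdef
  set F : ℝ → Bool := win (fun ξ => !u ξ) df mf with hFdef
  have hRF : ∀ t, ¬(R t = true ∧ F t = true) := by
    rintro t ⟨h1, h2⟩
    rw [hRdef, win_eq_true_iff] at h1
    rw [hFdef, win_eq_true_iff] at h2
    have hm1 : max (t - dr) (t - df) ∈ Icc (t - dr) (t - dr + mr) :=
      ⟨le_max_left _ _, max_le (by linarith) (by linarith)⟩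
    have hm2 : max (t - dr) (t - df) ∈ Icc (t - df) (t - df + mf) :=
      ⟨le_max_right _ _, max_le (by linarith) (by linarith)⟩
    have e1 := h1 _ hm1
    have e2 := h2 _ hm2
    simp only [Bool.not_eq_true'] at e2
    rw [e1] at e2
    exact Bool.noConfusion e2
  have hRr := win_right (u := u) (c := dr) (m := mr) hmr hur
  have hRl := win_left (u := u) (c := dr) (m := mr) hmr hul
  have hFr := win_right (u := fun ξ => !u ξ) (c := df) (m := mf) hmf hur2
  have hFl := win_left (u := fun ξ => !u ξ) (c := df) (m := mf) hmf hul2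
  set c : Bool := u (Bu - 1) with hcdef
  set B : ℝ := Bu + min (dr - mr) (df - mf) with hBdef
  have hRinit : ∀ t, t < B → R t = c := by
    intro t ht
    have hwin : ∀ ξ ∈ Icc (t - dr) (t - dr + mr), ξ < Bu := by
      intro ξ hξ
      have := min_le_left (dr - mr) (df - mf)
      rw [hBdef] at ht
      linarith [hξ.2]
    cases hc : c with
    | true =>
      rw [hRdef, win_eq_true_iff]
      intro ξ hξ
      rw [hBu ξ (hwin ξ hξ) (Bu - 1) (by simp only [mem_Iio]; linarith), ← hcdef, hc]
    | false =>
      rw [hRdef, Bool.eq_false_iff]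
      intro hT
      rw [win_eq_true_iff] at hT
      have h1 := hT (t - dr) ⟨le_refl _, by linarith⟩
      rw [hBu (t - dr) (hwin _ ⟨le_refl _, by linarith⟩) (Bu - 1)
        (by simp only [mem_Iio]; linarith), ← hcdef, hc] at h1
      exact Bool.noConfusion h1
  have hFinit : ∀ t, t < B → F t = !c := by
    intro t ht
    have hwin : ∀ ξ ∈ Icc (t - df) (t - df + mf), ξ < Bu := by
      intro ξ hξ
      have := min_le_right (dr - mr) (df - mf)
      rw [hBdef] at ht
      linarith [hξ.2]
    cases hc : c with
    | false =>
      rw [hFdef]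
      simp only [Bool.not_false]
      rw [win_eq_true_iff]
      intro ξ hξ
      show (!(u ξ)) = true
      rw [hBu ξ (hwin ξ hξ) (Bu - 1) (by simp only [mem_Iio]; linarith), ← hcdef, hc]
      rfl
    | true =>
      rw [hFdef]
      simp only [Bool.not_true]
      rw [Bool.eq_false_iff]
      intro hT
      rw [win_eq_true_iff] at hT
      have h1 := hT (t - df) ⟨le_refl _, by linarith⟩
      rw [hBu (t - df) (hwin _ ⟨le_refl _, by linarith⟩) (Bu - 1)
        (by simp only [mem_Iio]; linarith), ← hcdef, hc] at h1
      exact Bool.noConfusion h1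
  set x : ℝ → Bool := sol R F with hxdef
  have hxinit : ∀ t, t < B → x t = c := by
    intro t ht
    cases hc : c with
    | true =>
      rw [hxdef]
      rw [sol_eq_true_iff]
      exact ⟨t, le_refl t, by rw [hRinit t ht, hc],
        fun r h1 h2 => absurd (lt_of_lt_of_le h1 h2) (lt_irrefl t)⟩
    | false =>
      rw [hxdef, Bool.eq_false_iff]
      intro hsol
      obtain ⟨s, hst, hRs, _⟩ := sol_eq_true_iff.mp hsol
      have h1 : R s = c := hRinit s (lt_of_le_of_lt hst ht)
      rw [hRs, hc] at h1
      exact Bool.noConfusion h1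
  have hxsig : IsSignal x :=
    isSignal_of ⟨B, fun a ha b hb => by rw [hxinit a ha, hxinit b hb]⟩
      (sol_right hRF hRr hFr) (sol_left hRF hRl hFl)
  have hxspec := sol_spec hRF hRl hFl
  refine ⟨x, ⟨hxsig, fun t => ?_⟩, ?_⟩
  · exact (bool_cond (leftVal x t) (x t) (R t) (F t)).mpr (hxspec t)
  · rintro y ⟨hysig, hyeq⟩
    have hyspec : ∀ t, (leftVal y t = false → y t = R t) ∧
        (leftVal y t = true → y t = !F t) :=
      fun t => (bool_cond (leftVal y t) (y t) (R t) (F t)).mp (hyeq t)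
    exact uniq_sol hRinit hFinit hysig hxsig hyspec hxspec
end
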